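/- Let u : [0,1] → ℂ be smooth with u(0) = 0 and satisfy u'' + (c/r)u' + ((r²(A² − B²) − λ)/r²)u = 0 on (0,1], where c, A, B are real, λ ≥ 0, and suppose r²(A² − B²) − λ < 0 for all r in an interval (0, r₀) with 0 < r₀ ≤ 1. Then F(r) = |u(r)|² has no interior local maximum on (0, r₀); consequently sup_{[0,1]} |u| = sup_{[r₀,1]} |u|. -/

import Mathlib

open Set Filter
open Topology

/-- Maximum principle for the cavity master equation. Let `u : [0,1] → ℂ` be smooth
with `u(0) = 0`, satisfying `u'' + (c/r)u' + ((r²(A²−B²) − λ)/r²)u = 0` on `(0,1]`,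
with `λ ≥ 0`, and suppose `r²(A²−B²) − λ < 0` on `(0,r₀)`. Then `F = |u|²` has no
interior local maximum (where it is nonzero) on `(0,r₀)`; consequently
`sup_{[0,1]} |u| = sup_{[r₀,1]} |u|`. -/
theorem stmt_13 (u : ℝ → ℂ) (c A B lam r₀ : ℝ)
    (hlam : 0 ≤ lam) (hr₀ : 0 < r₀) (hr₀1 : r₀ ≤ 1)
    (hu : ContDiffOn ℝ (⊤ : ℕ∞) u (Set.Icc 0 1)) (hu0 : u 0 = 0)
    (hode : ∀ r ∈ Set.Ioc (0 : ℝ) 1,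
      deriv (deriv u) r + ((c / r : ℝ) : ℂ) * deriv u r
        + (((r ^ 2 * (A ^ 2 - B ^ 2) - lam) / r ^ 2 : ℝ) : ℂ) * u r = 0)
    (hneg : ∀ r ∈ Set.Ioo (0 : ℝ) r₀, r ^ 2 * (A ^ 2 - B ^ 2) - lam < 0) :
    (∀ r ∈ Set.Ioo (0 : ℝ) r₀, ‖u r‖ ^ 2 ≠ 0 →
      ¬ IsLocalMax (fun s : ℝ => ‖u s‖ ^ 2) r) ∧
    sSup ((fun s : ℝ => ‖u s‖) '' Set.Icc 0 1) =
      sSup ((fun s : ℝ => ‖u s‖) '' Set.Icc r₀ 1) := by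
  set S : Set ℝ := Set.Ioo 0 1 with hS
  have hSopen : IsOpen S := isOpen_Ioo
  set G : ℝ → ℝ := fun s => (u s).re * (u s).re + (u s).im * (u s).im with hGdef
  set P : ℝ → ℝ := fun s =>
    (u s).re * (deriv u s).re + (u s).im * (deriv u s).im with hPdef
  have hFG : (fun s : ℝ => ‖u s‖ ^ 2) = G := by
    funext s
    rw [Complex.sq_norm, Complex.normSq_apply]
  have huS : ContDiffOn ℝ ((⊤:ℕ∞):WithTop ℕ∞) u S :=
    (hu.of_le (by simp)).mono Ioo_subset_Icc_self
  have hsplit := (contDiffOn_infty_iff_deriv_of_isOpen hSopen).1 huS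
  have hdu : DifferentiableOn ℝ u S := hsplit.1
  have hduS : ContDiffOn ℝ ((⊤:ℕ∞):WithTop ℕ∞) (deriv u) S := hsplit.2
  have hsplit2 := (contDiffOn_infty_iff_deriv_of_isOpen hSopen).1 hduS
  have hddu : DifferentiableOn ℝ (deriv u) S := hsplit2.1
  have hd1 : ∀ r ∈ S, HasDerivAt u (deriv u r) r := fun r hr =>
    (hdu.differentiableAt (hSopen.mem_nhds hr)).hasDerivAt
  have hd2 : ∀ r ∈ S, HasDerivAt (deriv u) (deriv (deriv u) r) r := fun r hr =>
    (hddu.differentiableAt (hSopen.mem_nhds hr)).hasDerivAt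
  have hre1 : ∀ r ∈ S, HasDerivAt (fun s => (u s).re) ((deriv u r).re) r := fun r hr =>
    Complex.reCLM.hasFDerivAt.comp_hasDerivAt r (hd1 r hr)
  have him1 : ∀ r ∈ S, HasDerivAt (fun s => (u s).im) ((deriv u r).im) r := fun r hr =>
    Complex.imCLM.hasFDerivAt.comp_hasDerivAt r (hd1 r hr)
  have hre2 : ∀ r ∈ S, HasDerivAt (fun s => (deriv u s).re) ((deriv (deriv u) r).re) r :=
    fun r hr => Complex.reCLM.hasFDerivAt.comp_hasDerivAt r (hd2 r hr)
  have him2 : ∀ r ∈ S, HasDerivAt (fun s => (deriv u s).im) ((deriv (deriv u) r).im) r :=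
    fun r hr => Complex.imCLM.hasFDerivAt.comp_hasDerivAt r (hd2 r hr)
  have hGd : ∀ r ∈ S, HasDerivAt G (2 * P r) r := by
    intro r hr
    have h := ((hre1 r hr).mul (hre1 r hr)).add ((him1 r hr).mul (him1 r hr))
    refine HasDerivAt.congr_deriv h ?_
    simp only [hPdef]; ring
  have hPd : ∀ r ∈ S, HasDerivAt P
      (((deriv u r).re * (deriv u r).re + (deriv u r).im * (deriv u r).im)
        + ((u r).re * (deriv (deriv u) r).re + (u r).im * (deriv (deriv u) r).im)) r := by
    intro r hr
    have h := ((hre1 r hr).mul (hre2 r hr)).add ((him1 r hr).mul (him2 r hr))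
    refine HasDerivAt.congr_deriv h ?_
    ring
  -- smoothness of P on S, hence continuity of deriv P on S
  have hPsmooth : ContDiffOn ℝ ((⊤:ℕ∞):WithTop ℕ∞) P S := by
    have h1 : ContDiffOn ℝ ((⊤:ℕ∞):WithTop ℕ∞) (fun s => (u s).re) S :=
      Complex.reCLM.contDiff.comp_contDiffOn huS
    have h2 : ContDiffOn ℝ ((⊤:ℕ∞):WithTop ℕ∞) (fun s => (u s).im) S :=
      Complex.imCLM.contDiff.comp_contDiffOn huS
    have h3 : ContDiffOn ℝ ((⊤:ℕ∞):WithTop ℕ∞) (fun s => (deriv u s).re) S :=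
      Complex.reCLM.contDiff.comp_contDiffOn hduS
    have h4 : ContDiffOn ℝ ((⊤:ℕ∞):WithTop ℕ∞) (fun s => (deriv u s).im) S :=
      Complex.imCLM.contDiff.comp_contDiffOn hduS
    exact (h1.mul h3).add (h2.mul h4)
  have hdPcont : ContinuousOn (deriv P) S :=
    ((contDiffOn_infty_iff_deriv_of_isOpen hSopen).1 hPsmooth).2.continuousOn
  -- Claim 1 : no interior local max
  have key1 : ∀ r ∈ Set.Ioo (0 : ℝ) r₀, G r ≠ 0 → ¬ IsLocalMax G r := by
    intro r hr hGne hmax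
    have hrS : r ∈ S := ⟨hr.1, lt_of_lt_of_le hr.2 hr₀1⟩
    have hGnn : 0 ≤ G r := add_nonneg (mul_self_nonneg _) (mul_self_nonneg _)
    have hGpos : 0 < G r := lt_of_le_of_ne hGnn (Ne.symm hGne)
    have hderivG : deriv G r = 2 * P r := (hGd r hrS).deriv
    have hP0 : P r = 0 := by
      have := hmax.deriv_eq_zero
      rw [hderivG] at this; linarith
    set k : ℝ := (r ^ 2 * (A ^ 2 - B ^ 2) - lam) / r ^ 2 with hk
    have hkneg : k < 0 := div_neg_of_neg_of_pos (hneg r hr) (pow_pos hr.1 2)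
    have hODE := hode r ⟨hr.1, hrS.2.le⟩
    have hu'' : deriv (deriv u) r = -(((c / r : ℝ) : ℂ) * deriv u r) - ((k : ℝ) : ℂ) * u r := by
      rw [← hk] at hODE; linear_combination hODE
    have hre'' : (deriv (deriv u) r).re = -((c / r) * (deriv u r).re) - k * (u r).re := by
      rw [hu'']; simp
    have him'' : (deriv (deriv u) r).im = -((c / r) * (deriv u r).im) - k * (u r).im := by
      rw [hu'']; simp
    have hdPpos : 0 < deriv P r := by
      rw [(hPd r hrS).deriv, hre'', him'']
      have h1 : (u r).re * (-((c / r) * (deriv u r).re) - k * (u r).re)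
          + (u r).im * (-((c / r) * (deriv u r).im) - k * (u r).im)
          = -(c / r) * P r - k * G r := by simp only [hPdef, hGdef]; ring
      rw [h1, hP0, mul_zero, zero_sub]
      have h2 : 0 < -k * G r := mul_pos (neg_pos.2 hkneg) hGpos
      nlinarith [mul_self_nonneg (deriv u r).re, mul_self_nonneg (deriv u r).im]
    have hev : ∀ᶠ x in 𝓝 r, (0 < deriv P x ∧ x ∈ S) ∧ G x ≤ G r := by
      refine (Filter.Eventually.and ?_ ?_).and hmax
      · exact (hdPcont.continuousAt (hSopen.mem_nhds hrS)) (Ioi_mem_nhds hdPpos)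
      · exact hSopen.mem_nhds hrS
    rw [Metric.eventually_nhds_iff] at hev
    obtain ⟨ε, hε, hball⟩ := hev
    set s₀ : ℝ := r + ε / 2 with hs₀
    have hrs₀ : r < s₀ := by simp [hs₀]; linarith
    have hDball : ∀ x ∈ Set.Icc r s₀, (0 < deriv P x ∧ x ∈ S) ∧ G x ≤ G r := by
      intro x hx
      apply hball
      rw [Real.dist_eq, abs_lt]
      constructor <;> [linarith [hx.1]; linarith [hx.2, hs₀ ▸ hx.2]]
    have hPcontD : ContinuousOn P (Set.Icc r s₀) := fun x hx =>
      ((hPd x (hDball x hx).1.2).continuousAt).continuousWithinAt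
    have hPmono : StrictMonoOn P (Set.Icc r s₀) := by
      apply strictMonoOn_of_deriv_pos (convex_Icc _ _) hPcontD
      intro x hx
      rw [interior_Icc] at hx
      exact (hDball x ⟨hx.1.le, hx.2.le⟩).1.1
    have hGcontD : ContinuousOn G (Set.Icc r s₀) := fun x hx =>
      ((hGd x (hDball x hx).1.2).continuousAt).continuousWithinAt
    have hGmono : StrictMonoOn G (Set.Icc r s₀) := by
      apply strictMonoOn_of_deriv_pos (convex_Icc _ _) hGcontD
      intro x hx
      rw [interior_Icc] at hx
      have hxD : x ∈ Set.Icc r s₀ := ⟨hx.1.le, hx.2.le⟩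
      rw [(hGd x (hDball x hxD).1.2).deriv]
      have hPx : 0 < P x := by
        have := hPmono (Set.left_mem_Icc.2 hrs₀.le) hxD hx.1
        rw [hP0] at this; exact this
      linarith
    have hlt : G r < G s₀ :=
      hGmono (Set.left_mem_Icc.2 hrs₀.le) (Set.right_mem_Icc.2 hrs₀.le) hrs₀
    have hle : G s₀ ≤ G r := (hDball s₀ (Set.right_mem_Icc.2 hrs₀.le)).2
    linarith
  -- continuity of G and abs ∘ u on [0,1]
  have hucont : ContinuousOn u (Set.Icc 0 1) := hu.continuousOn
  have habs_cont : ContinuousOn (fun s => ‖u s‖) (Set.Icc 0 1) :=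
    continuous_norm.comp_continuousOn hucont
  have hGcont : ContinuousOn G (Set.Icc 0 1) := by
    have h1 : ContinuousOn (fun s => (u s).re) (Set.Icc 0 1) :=
      Complex.continuous_re.comp_continuousOn hucont
    have h2 : ContinuousOn (fun s => (u s).im) (Set.Icc 0 1) :=
      Complex.continuous_im.comp_continuousOn hucont
    exact (h1.mul h1).add (h2.mul h2)
  have hGnn : ∀ x, 0 ≤ G x := fun x => add_nonneg (mul_self_nonneg _) (mul_self_nonneg _)
  -- Claim 2: G ≤ G r₀ on [0, r₀]
  have claim2 : ∀ x ∈ Set.Icc 0 r₀, G x ≤ G r₀ := by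
    have hsub : Set.Icc (0:ℝ) r₀ ⊆ Set.Icc 0 1 := Set.Icc_subset_Icc le_rfl hr₀1
    obtain ⟨xs, hxs, hmax⟩ := isCompact_Icc.exists_isMaxOn (Set.nonempty_Icc.2 hr₀.le)
      (hGcont.mono hsub)
    have hstar : G xs ≤ G r₀ := by
      by_cases h0 : G xs = 0
      · rw [h0]; exact hGnn r₀
      · by_cases hxr : xs = r₀
        · rw [hxr]
        · exfalso
          have hxs0 : xs ≠ 0 := by
            intro h; apply h0; rw [h]; simp [hGdef, hu0]
          have hxsIoo : xs ∈ Set.Ioo (0:ℝ) r₀ :=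
            ⟨lt_of_le_of_ne hxs.1 (Ne.symm hxs0), lt_of_le_of_ne hxs.2 hxr⟩
          exact key1 xs hxsIoo h0
            (hmax.isLocalMax (Icc_mem_nhds hxsIoo.1 hxsIoo.2))
    intro x hx
    exact le_trans (hmax hx) hstar
  have habs2 : ∀ x ∈ Set.Icc 0 r₀, ‖u x‖ ≤ ‖u r₀‖ := by
    intro x hx
    have h := claim2 x hx
    have h1 : ‖u x‖ ^ 2 = G x := congrFun hFG x
    have h2 : ‖u r₀‖ ^ 2 = G r₀ := congrFun hFG r₀
    nlinarith [norm_nonneg (u x), norm_nonneg (u r₀)]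
  constructor
  · intro r hr hne hmax
    rw [hFG] at hmax
    have hne' : G r ≠ 0 := by rw [← congrFun hFG r]; exact hne
    exact key1 r hr hne' hmax
  · have hr₀mem : r₀ ∈ Set.Icc r₀ 1 := ⟨le_rfl, hr₀1⟩
    have hsubset : (fun s => ‖u s‖) '' Set.Icc r₀ 1 ⊆
        (fun s => ‖u s‖) '' Set.Icc 0 1 :=
      Set.image_mono (Set.Icc_subset_Icc hr₀.le le_rfl)
    have hbdd : BddAbove ((fun s => ‖u s‖) '' Set.Icc 0 1) :=
      (isCompact_Icc.image_of_continuousOn habs_cont).bddAbove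
    have hbdd' : BddAbove ((fun s => ‖u s‖) '' Set.Icc r₀ 1) :=
      hbdd.mono hsubset
    have hne1 : ((fun s => ‖u s‖) '' Set.Icc r₀ 1).Nonempty :=
      ⟨_, ⟨r₀, hr₀mem, rfl⟩⟩
    apply le_antisymm
    · apply csSup_le (hne1.mono hsubset)
      rintro y ⟨x, hx, rfl⟩
      by_cases hxr : r₀ ≤ x
      · exact le_csSup hbdd' ⟨x, ⟨hxr, hx.2⟩, rfl⟩
      · exact le_trans (habs2 x ⟨hx.1, le_of_not_ge hxr⟩)
          (le_csSup hbdd' ⟨r₀, hr₀mem, rfl⟩)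
    · exact csSup_le_csSup hbdd hne1 hsubset
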